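/- Let k be an integer with 0 ≤ k ≤ m-1, and define a = (γ^(2m) + γ^(m+6k+2) + γ^(3k+1))/(3γ^(m+3k+1)), b = (γ^(2m+3k+1) + γ^(m+6k+2) + 1)/(3γ^(m+3k+1)), c = (γ^(6k+2) + γ^(3k+1) + 1)/(3γ^(3k+1)) in F_q, and let g(x) = a·x^(2m+1) + b·x^(m+1) + c·x. Then for every integer i with 0 ≤ i ≤ m-1 one has g(γ^(3i)) = γ^(3(i+k)+1). -/

import Mathlib

/-!
Put `ω = γ^m` and `s = γ^(3k+1)`. Every `x = γ^(3i)` satisfies `x^m = 1`, so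
`g x = (a + b + c) x`, and it remains to see that `a + b + c = s`. Over the common
denominator `3ωs` the numerator of `a + b + c` is `3ωs² + (1 + s)(ω² + ω + 1)`, and
`ω² + ω + 1 = 0` because `ω` is a primitive cube root of unity.
-/

theorem FiniteField.natCast_ne_zero_of_card_mod_eq_one {F : Type*} [Field F] [Fintype F]
    {n : ℕ} (h : Fintype.card F % n = 1) : (n : F) ≠ 0 := by
  intro hn
  have hcard : ((Fintype.card F : ℕ) : F) = n * (Fintype.card F / n : ℕ) + 1 := by
    rw [← Nat.cast_mul, ← Nat.cast_add_one, ← h, Nat.div_add_mod]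
  simp [hn] at hcard

theorem FiniteField.isPrimitiveRoot_pow_of_forall_mem_zpowers {F : Type*} [Field F] [Fintype F]
    {γ : Fˣ} (hγ : ∀ x : Fˣ, x ∈ Subgroup.zpowers γ) {m n : ℕ}
    (h : Fintype.card F - 1 = m * n) : IsPrimitiveRoot ((γ : F) ^ m) n := by
  have hord : orderOf γ = m * n := by
    rw [orderOf_eq_card_of_forall_mem_zpowers hγ, Nat.card_units, Nat.card_eq_fintype_card, h]
  rw [← Units.val_pow_eq_pow_val, IsPrimitiveRoot.coe_units_iff]
  exact (IsPrimitiveRoot.orderOf γ).pow (hord ▸ orderOf_pos γ) hord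

theorem IsPrimitiveRoot.sq_add_self_add_one {R : Type*} [CommRing R] [IsDomain R] {ω : R}
    (hω : IsPrimitiveRoot ω 3) : ω ^ 2 + ω + 1 = 0 := by
  have := hω.geom_sum_eq_zero (by norm_num)
  simp only [Finset.sum_range_succ, Finset.sum_range_zero] at this
  linear_combination this

theorem coeff_sum_eq_of_sq_add_self_add_one {K : Type*} [Field K] {t : K} {m k : ℕ}
    (h3 : (3 : K) ≠ 0) (ht : t ≠ 0) (hω : (t ^ m) ^ 2 + t ^ m + 1 = 0) :
    (t ^ (2*m) + t ^ (m+6*k+2) + t ^ (3*k+1)) / (3 * t ^ (m+3*k+1))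
      + (t ^ (2*m+3*k+1) + t ^ (m+6*k+2) + 1) / (3 * t ^ (m+3*k+1))
      + (t ^ (6*k+2) + t ^ (3*k+1) + 1) / (3 * t ^ (3*k+1)) = t ^ (3*k+1) := by
  field_simp
  linear_combination t ^ (3*k+1) * (t ^ (3*k+1) + 1) * hω

theorem stmt10_general (q m : ℕ) (F : Type*) [Field F] [Fintype F]
    (hq : Fintype.card F = q) (hq3 : q % 3 = 1)
    (hm : m = (q - 1) / 3)
    (γ : Fˣ) (hγ : ∀ x : Fˣ, x ∈ Subgroup.zpowers γ)
    (k : ℕ)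
    (a b c : F)
    (ha : a = ((γ : F)^(2*m) + (γ : F)^(m+6*k+2) + (γ : F)^(3*k+1)) / (3 * (γ : F)^(m+3*k+1)))
    (hb : b = ((γ : F)^(2*m+3*k+1) + (γ : F)^(m+6*k+2) + 1) / (3 * (γ : F)^(m+3*k+1)))
    (hc : c = ((γ : F)^(6*k+2) + (γ : F)^(3*k+1) + 1) / (3 * (γ : F)^(3*k+1)))
    (g : F → F)
    (hg : ∀ x : F, g x = a * x^(2*m+1) + b * x^(m+1) + c * x) :
    ∀ i : ℕ, i ≤ m - 1 → g ((γ : F)^(3*i)) = (γ : F)^(3*(i+k)+1) := by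
  intro i _
  have hcard : Fintype.card F - 1 = m * 3 := by omega
  have hω := FiniteField.isPrimitiveRoot_pow_of_forall_mem_zpowers hγ hcard
  have habc : a + b + c = (γ : F) ^ (3*k+1) := by
    rw [ha, hb, hc]
    exact coeff_sum_eq_of_sq_add_self_add_one
      (FiniteField.natCast_ne_zero_of_card_mod_eq_one (n := 3) (hq ▸ hq3)) γ.ne_zero
      hω.sq_add_self_add_one
  have hx : ((γ : F) ^ (3*i)) ^ m = 1 := by
    rw [← pow_mul, show 3*i*m = m*3*i by ring, pow_mul, pow_mul, hω.pow_eq_one, one_pow]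
  calc g ((γ : F) ^ (3*i))
      = (a * (((γ : F) ^ (3*i)) ^ m) ^ 2 + b * ((γ : F) ^ (3*i)) ^ m + c) * (γ : F) ^ (3*i) := by
        rw [hg]; ring
    _ = (a + b + c) * (γ : F) ^ (3*i) := by rw [hx]; ring
    _ = (γ : F) ^ (3*(i+k)+1) := by rw [habc]; ring

theorem stmt10 (q m : ℕ) (F : Type*) [Field F] [Fintype F]
    (hq : Fintype.card F = q) (hodd : Odd q) (hq3 : q % 3 = 1)
    (hm : m = (q - 1) / 3)
    (γ : Fˣ) (hγ : ∀ x : Fˣ, x ∈ Subgroup.zpowers γ)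
    (k : ℕ) (hk : k ≤ m - 1)
    (a b c : F)
    (ha : a = ((γ : F)^(2*m) + (γ : F)^(m+6*k+2) + (γ : F)^(3*k+1)) / (3 * (γ : F)^(m+3*k+1)))
    (hb : b = ((γ : F)^(2*m+3*k+1) + (γ : F)^(m+6*k+2) + 1) / (3 * (γ : F)^(m+3*k+1)))
    (hc : c = ((γ : F)^(6*k+2) + (γ : F)^(3*k+1) + 1) / (3 * (γ : F)^(3*k+1)))
    (g : F → F)
    (hg : ∀ x : F, g x = a * x^(2*m+1) + b * x^(m+1) + c * x) :
    ∀ i : ℕ, i ≤ m - 1 → g ((γ : F)^(3*i)) = (γ : F)^(3*(i+k)+1) :=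
  stmt10_general q m F hq hq3 hm γ hγ k a b c ha hb hc g hg
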